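/- Fix s ∈ X, N ≥ 1 and Λ ≥ 1, and assume that for every 0 ≤ k ≤ N−1 one has (∑_{w∈W_k} a_s(w)) · (∑_{w∈W_k} a_s(w)^{-1}) ≤ Λ m^{2k} in [0,∞] (with 1/0 := +∞). Then the uniform splitting flow θ^unif(w,wi) := m^{−(|w|+1)} is a unit flow to depth N whose energy satisfies 𝔈_s(θ^unif) ≤ Λ ∑_{k=0}^{N−1} m^k/(u_{2k+1}(s) − u_{2k}(s)). In particular, R_N(s) ≤ Λ ∑_{k=0}^{N−1} m^k/(u_{2k+1}(s) − u_{2k}(s)). -/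

import Mathlib

/-!
The uniform flow puts `m^{-(k+1)}` on each of the `m^{k+1}` edges leaving level `k`, so its
level-`k` energy is `m^{-k} ∑_{|w|=k} 1/a_s(w)`; the concentration hypothesis bounds this by
`Λ m^k / ∑_{|w|=k} a_s(w)`. Since `K_{2k+1} = L^k K_{k+1}` and `K_{2k} = L^k K_k`, expanding
`L^k` over words of length `k` gives `∑_{|w|=k} a_s(w) = u_{2k+1}(s) − u_{2k}(s)`.
-/

open Filter Topology
open scoped BigOperators ComplexOrder ENNReal

/-- A kernel `J : X × X → ℂ` is positive definite: every finite Gram sum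
`∑ conj (c α) * c β * J (s α) (s β)` is a nonnegative real number
(using the partial order on `ℂ`). -/
def IsPD {X : Type*} (J : X → X → ℂ) : Prop :=
  ∀ (r : ℕ) (c : Fin r → ℂ) (p : Fin r → X),
    0 ≤ ∑ α, ∑ β, (starRingEnd ℂ) (c α) * c β * J (p α) (p β)

/-- The pullback operator `(LJ)(s,t) = ∑ i, J (φ i s) (φ i t)`. -/
noncomputable def pullback {X : Type*} (m : ℕ) (φ : Fin m → X → X) (J : X → X → ℂ) :
    X → X → ℂ :=
  fun s t => ∑ i, J (φ i s) (φ i t)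

/-- For a word `w = i₁⋯iₙ ∈ {1,…,m}ⁿ`, `phiW φ w = φ_{iₙ} ∘ ⋯ ∘ φ_{i₁}`. -/
def phiW {X : Type*} {m : ℕ} (φ : Fin m → X → X) : {n : ℕ} → (Fin n → Fin m) → X → X
  | 0, _, x => x
  | n + 1, w, x => φ (w (Fin.last n)) (phiW φ (fun i => w i.castSucc) x)

/-- The tower `K₀ = K`, `K_{n+1} = L Kₙ`. -/
noncomputable def tower {X : Type*} (m : ℕ) (φ : Fin m → X → X) (K : X → X → ℂ) :
    ℕ → X → X → ℂ
  | 0 => K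
  | n + 1 => pullback m φ (tower m φ K n)

/-- The diagonal `uₙ(s) = Kₙ(s,s)` (a real number, as `Kₙ` is p.d.). -/
noncomputable def diag {X : Type*} (m : ℕ) (φ : Fin m → X → X) (K : X → X → ℂ)
    (n : ℕ) (s : X) : ℝ :=
  (tower m φ K n s s).re

/-- The diagonal increment `a_s(w) = u_{|w|+1}(φ_w s) − u_{|w|}(φ_w s)`. -/
noncomputable def incr {X : Type*} (m : ℕ) (φ : Fin m → X → X) (K : X → X → ℂ)
    (s : X) {k : ℕ} (w : Fin k → Fin m) : ℝ :=
  diag m φ K (k + 1) (phiW φ w s) - diag m φ K k (phiW φ w s)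

/-- A unit flow to depth `N` on the rooted `m`-ary word tree:
`θ k w i` is the flow through the edge `(w, wi)` with `|w| = k`. -/
def IsUnitFlow (m N : ℕ) (θ : (k : ℕ) → (Fin k → Fin m) → Fin m → ℝ) : Prop :=
  (∀ k, k < N → ∀ (w : Fin k → Fin m) (i : Fin m), 0 ≤ θ k w i) ∧
  (∑ i : Fin m, θ 0 (fun j => j.elim0) i = 1) ∧
  (∀ k, k + 1 < N → ∀ (w : Fin k → Fin m) (i : Fin m),
    θ k w i = ∑ j : Fin m, θ (k + 1) (Fin.snoc w i) j)

/-- The energy `𝔈_s(θ) = ∑_e θ(e)² / c_s(e) ∈ [0,∞]`, where the edge `(w,wi)`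
has conductance `c_s(w,wi) = a_s(w)/m^{|w|+1}` (with `0/0 = 0` and `x/0 = ∞`
for `x > 0`, as in `ℝ≥0∞`). -/
noncomputable def energy {X : Type*} (m : ℕ) (φ : Fin m → X → X) (K : X → X → ℂ)
    (s : X) (N : ℕ) (θ : (k : ℕ) → (Fin k → Fin m) → Fin m → ℝ) : ℝ≥0∞ :=
  ∑ k ∈ Finset.range N, ∑ w : Fin k → Fin m, ∑ i : Fin m,
    ENNReal.ofReal (θ k w i) ^ 2 / ENNReal.ofReal (incr m φ K s w / (m : ℝ) ^ (k + 1))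

/-- The effective resistance `R_N(s)`: infimum of the energy over unit flows to depth `N`. -/
noncomputable def resistance {X : Type*} (m : ℕ) (φ : Fin m → X → X) (K : X → X → ℂ)
    (s : X) (N : ℕ) : ℝ≥0∞ :=
  ⨅ (θ : (k : ℕ) → (Fin k → Fin m) → Fin m → ℝ) (_ : IsUnitFlow m N θ),
    energy m φ K s N θ

/-- The scalar series `S(s) = ∑ₖ m^k / (u_{2k+1}(s) − u_{2k}(s)) ∈ [0,∞]`
(a term with zero denominator being `+∞`). -/
noncomputable def Sser {X : Type*} (m : ℕ) (φ : Fin m → X → X) (K : X → X → ℂ)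
    (s : X) : ℝ≥0∞ :=
  ∑' k : ℕ,
    (m : ℝ≥0∞) ^ k / ENNReal.ofReal (diag m φ K (2 * k + 1) s - diag m φ K (2 * k) s)

theorem ENNReal.inv_mul_le_mul_div_of_mul_le {a b c M : ℝ≥0∞} (hM0 : M ≠ 0) (hM : M ≠ ∞)
    (hc : c ≠ 0) (ha : a ≠ ∞) (h : a * b ≤ c * M ^ 2) : M⁻¹ * b ≤ c * M / a := by
  have hb : b ≤ c * M ^ 2 / a :=
    (ENNReal.le_div_iff_mul_le (Or.inr (by simp [hc, hM0])) (Or.inl ha)).mpr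
      (by rwa [mul_comm])
  calc M⁻¹ * b ≤ M⁻¹ * (c * M ^ 2 / a) := by gcongr
    _ = c * M / a := by
      rw [show c * M ^ 2 = M * (c * M) by ring, mul_div_assoc, ← mul_assoc,
        ENNReal.inv_mul_cancel hM0 hM, one_mul]

section Tower

variable {X : Type*} {m : ℕ} {φ : Fin m → X → X} {K : X → X → ℂ}

theorem isPD_pullback {J : X → X → ℂ} (hJ : IsPD J) : IsPD (pullback m φ J) := by
  intro r c p
  calc (0 : ℂ)
      ≤ ∑ i : Fin m, ∑ α, ∑ β, (starRingEnd ℂ) (c α) * c β * J (φ i (p α)) (φ i (p β)) :=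
        Finset.sum_nonneg fun i _ => hJ r c (fun α => φ i (p α))
    _ = ∑ α, ∑ β, (starRingEnd ℂ) (c α) * c β * pullback m φ J (p α) (p β) := by
        simp only [pullback, Finset.mul_sum]
        rw [Finset.sum_comm]
        exact Finset.sum_congr rfl fun α _ => Finset.sum_comm

theorem isPD_tower_succ_sub (hsub : IsPD fun s t => pullback m φ K s t - K s t) (n : ℕ) :
    IsPD fun s t => tower m φ K (n + 1) s t - tower m φ K n s t := by
  induction n with
  | zero => exact hsub
  | succ n ih =>
    convert isPD_pullback (φ := φ) ih using 1
    funext s t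
    simp [pullback, tower, Finset.sum_sub_distrib]

theorem diag_le_diag_succ (hsub : IsPD fun s t => pullback m φ K s t - K s t) (n : ℕ)
    (x : X) : diag m φ K n x ≤ diag m φ K (n + 1) x := by
  have h := isPD_tower_succ_sub hsub n 1 (fun _ => 1) (fun _ => x)
  simp only [Fin.sum_univ_one, map_one, one_mul] at h
  simpa [diag] using (Complex.le_def.mp h).1

theorem incr_nonneg (hsub : IsPD fun s t => pullback m φ K s t - K s t) (s : X) {k : ℕ}
    (w : Fin k → Fin m) : 0 ≤ incr m φ K s w :=
  sub_nonneg.mpr (diag_le_diag_succ hsub k _)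

theorem phiW_snoc {k : ℕ} (w : Fin k → Fin m) (i : Fin m) (x : X) :
    phiW φ (Fin.snoc w i) x = φ i (phiW φ w x) := by
  simp [phiW, Fin.snoc_last, Fin.snoc_castSucc]

variable (m φ K)

theorem tower_add (n k : ℕ) (s t : X) :
    tower m φ K (n + k) s t = ∑ w : Fin k → Fin m, tower m φ K n (phiW φ w s) (phiW φ w t) := by
  induction k generalizing n s t with
  | zero => simp [phiW]
  | succ k ih =>
    calc tower m φ K (n + (k + 1)) s t
        = ∑ w : Fin k → Fin m, ∑ i : Fin m,
            tower m φ K n (φ i (phiW φ w s)) (φ i (phiW φ w t)) := by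
          rw [← add_assoc, add_right_comm, ih]
          rfl
      _ = ∑ p : Fin m × (Fin k → Fin m),
            tower m φ K n (phiW φ (Fin.snoc p.2 p.1) s) (phiW φ (Fin.snoc p.2 p.1) t) := by
          rw [Finset.sum_comm, Fintype.sum_prod_type]
          simp only [phiW_snoc]
      _ = ∑ w : Fin (k + 1) → Fin m, tower m φ K n (phiW φ w s) (phiW φ w t) :=
          Fintype.sum_equiv (Fin.snocEquiv fun _ => Fin m) _ _ fun p => by simp [Fin.snocEquiv]

theorem diag_add (n k : ℕ) (s : X) :
    diag m φ K (n + k) s = ∑ w : Fin k → Fin m, diag m φ K n (phiW φ w s) := by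
  rw [diag, tower_add, Complex.re_sum]
  rfl

theorem diag_sub_diag_eq_sum_incr (s : X) (k : ℕ) :
    diag m φ K (2 * k + 1) s - diag m φ K (2 * k) s = ∑ w : Fin k → Fin m, incr m φ K s w := by
  rw [show 2 * k + 1 = (k + 1) + k by ring, two_mul, diag_add, diag_add,
    ← Finset.sum_sub_distrib]
  rfl

end Tower

section UniformFlow

variable {m : ℕ}

noncomputable def uniformFlow (m : ℕ) : (k : ℕ) → (Fin k → Fin m) → Fin m → ℝ :=
  fun k _ _ => ((m : ℝ) ^ (k + 1))⁻¹

theorem isUnitFlow_uniformFlow (hm : m ≠ 0) (N : ℕ) : IsUnitFlow m N (uniformFlow m) := by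
  refine ⟨fun k _ w i => by simp only [uniformFlow]; positivity, ?_, fun k _ w i => ?_⟩
  · simp [uniformFlow, hm]
  · simp only [uniformFlow, Finset.sum_const, Finset.card_univ, Fintype.card_fin, nsmul_eq_mul]
    field_simp
    ring

theorem resistance_le_energy {X : Type*} {φ : Fin m → X → X} {K : X → X → ℂ} {s : X} {N : ℕ}
    {θ : (k : ℕ) → (Fin k → Fin m) → Fin m → ℝ} (hθ : IsUnitFlow m N θ) :
    resistance m φ K s N ≤ energy m φ K s N θ :=
  iInf₂_le θ hθ

theorem energy_uniformFlow {X : Type*} (hm : m ≠ 0) (φ : Fin m → X → X) (K : X → X → ℂ)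
    (s : X) (N : ℕ) :
    energy m φ K s N (uniformFlow m) = ∑ k ∈ Finset.range N,
      ((m : ℝ≥0∞) ^ k)⁻¹ * ∑ w : Fin k → Fin m, (ENNReal.ofReal (incr m φ K s w))⁻¹ := by
  refine Finset.sum_congr rfl fun k _ => ?_
  have hm0 : (m : ℝ≥0∞) ≠ 0 := by exact_mod_cast hm
  have hmtop : (m : ℝ≥0∞) ≠ ∞ := ENNReal.natCast_ne_top m
  have hpos : (0 : ℝ) < (m : ℝ) ^ (k + 1) := by positivity
  have hofReal : ENNReal.ofReal ((m : ℝ) ^ (k + 1)) = (m : ℝ≥0∞) ^ (k + 1) := by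
    rw [ENNReal.ofReal_pow (Nat.cast_nonneg _), ENNReal.ofReal_natCast]
  simp only [uniformFlow, ENNReal.ofReal_inv_of_pos hpos, ENNReal.ofReal_div_of_pos hpos,
    hofReal, Finset.sum_const, Finset.card_univ, Fintype.card_fin, nsmul_eq_mul, Finset.mul_sum]
  refine Finset.sum_congr rfl fun w _ => ?_
  set M := (m : ℝ≥0∞) ^ (k + 1) with hM
  have hM0 : M ≠ 0 := pow_ne_zero _ hm0
  have hMtop : M ≠ ∞ := ENNReal.pow_ne_top hmtop
  have hmM : (m : ℝ≥0∞) * M⁻¹ = ((m : ℝ≥0∞) ^ k)⁻¹ := by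
    rw [hM, pow_succ,
      ENNReal.mul_inv (Or.inl (pow_ne_zero _ hm0)) (Or.inl (ENNReal.pow_ne_top hmtop)), mul_comm,
      mul_assoc, ENNReal.inv_mul_cancel hm0 hmtop, mul_one]
  rw [div_eq_mul_inv, ENNReal.inv_div (Or.inl hMtop) (Or.inl hM0), sq, div_eq_mul_inv,
    mul_assoc, ← mul_assoc M⁻¹ M, ENNReal.inv_mul_cancel hM0 hMtop, one_mul, ← mul_assoc, hmM]

end UniformFlow

theorem stmt3_general {X : Type*} (m : ℕ) (hm : 1 ≤ m) (φ : Fin m → X → X)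
    (K : X → X → ℂ)
    (hsub : IsPD (fun s t => pullback m φ K s t - K s t))
    (s : X) (N : ℕ) (Λ : ℝ) (hΛ : 1 ≤ Λ)
    (hconc : ∀ k : ℕ, k < N →
      (∑ w : Fin k → Fin m, ENNReal.ofReal (incr m φ K s w)) *
          (∑ w : Fin k → Fin m, (ENNReal.ofReal (incr m φ K s w))⁻¹)
        ≤ ENNReal.ofReal Λ * (m : ℝ≥0∞) ^ (2 * k)) :
    IsUnitFlow m N (fun k _ _ => ((m : ℝ) ^ (k + 1))⁻¹) ∧
    energy m φ K s N (fun k _ _ => ((m : ℝ) ^ (k + 1))⁻¹)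
      ≤ ENNReal.ofReal Λ *
        ∑ k ∈ Finset.range N,
          (m : ℝ≥0∞) ^ k /
            ENNReal.ofReal (diag m φ K (2 * k + 1) s - diag m φ K (2 * k) s) ∧
    resistance m φ K s N
      ≤ ENNReal.ofReal Λ *
        ∑ k ∈ Finset.range N,
          (m : ℝ≥0∞) ^ k /
            ENNReal.ofReal (diag m φ K (2 * k + 1) s - diag m φ K (2 * k) s) := by
  have hm0 : m ≠ 0 := Nat.one_le_iff_ne_zero.mp hm
  have hΛ0 : ENNReal.ofReal Λ ≠ 0 := ENNReal.ofReal_ne_zero_iff.mpr (by linarith)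
  have hflow := isUnitFlow_uniformFlow hm0 N
  have henergy : energy m φ K s N (uniformFlow m) ≤ ENNReal.ofReal Λ *
      ∑ k ∈ Finset.range N, (m : ℝ≥0∞) ^ k /
        ENNReal.ofReal (diag m φ K (2 * k + 1) s - diag m φ K (2 * k) s) := by
    rw [energy_uniformFlow hm0, Finset.mul_sum]
    refine Finset.sum_le_sum fun k hk => ?_
    rw [diag_sub_diag_eq_sum_incr, ← mul_div_assoc,
      ENNReal.ofReal_sum_of_nonneg fun w _ => incr_nonneg hsub s w]
    refine ENNReal.inv_mul_le_mul_div_of_mul_le (pow_ne_zero k (Nat.cast_ne_zero.mpr hm0))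
      (ENNReal.pow_ne_top (ENNReal.natCast_ne_top m)) hΛ0
      (ENNReal.sum_ne_top.mpr fun w _ => ENNReal.ofReal_ne_top) ?_
    rw [← pow_mul, mul_comm k]
    exact hconc k (Finset.mem_range.mp hk)
  exact ⟨hflow, henergy, (resistance_le_energy hflow).trans henergy⟩

/-- Under the level concentration hypothesis, the uniform splitting flow is a unit flow
whose energy is at most `Λ` times the cutset bound; hence the matching upper bound for
the effective resistance. -/
theorem stmt3 {X : Type*} (m : ℕ) (hm : 1 ≤ m) (φ : Fin m → X → X)
    (K : X → X → ℂ) (hK : IsPD K)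
    (hsub : IsPD (fun s t => pullback m φ K s t - K s t))
    (s : X) (N : ℕ) (hN : 1 ≤ N) (Λ : ℝ) (hΛ : 1 ≤ Λ)
    (hconc : ∀ k : ℕ, k < N →
      (∑ w : Fin k → Fin m, ENNReal.ofReal (incr m φ K s w)) *
          (∑ w : Fin k → Fin m, (ENNReal.ofReal (incr m φ K s w))⁻¹)
        ≤ ENNReal.ofReal Λ * (m : ℝ≥0∞) ^ (2 * k)) :
    IsUnitFlow m N (fun k _ _ => ((m : ℝ) ^ (k + 1))⁻¹) ∧
    energy m φ K s N (fun k _ _ => ((m : ℝ) ^ (k + 1))⁻¹)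
      ≤ ENNReal.ofReal Λ *
        ∑ k ∈ Finset.range N,
          (m : ℝ≥0∞) ^ k /
            ENNReal.ofReal (diag m φ K (2 * k + 1) s - diag m φ K (2 * k) s) ∧
    resistance m φ K s N
      ≤ ENNReal.ofReal Λ *
        ∑ k ∈ Finset.range N,
          (m : ℝ≥0∞) ^ k /
            ENNReal.ofReal (diag m φ K (2 * k + 1) s - diag m φ K (2 * k) s) :=
  stmt3_general m hm φ K hsub s N Λ hΛ hconc
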